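/- Let Σ = (X, Y, M(U), φ, h) be a linear control system with U ≠ {0} that is exponentially stable, robust with respect to the input, and strictly causal. Then the minimum IOS-gain can be computed using only periodic inputs: γ = sup{ sup_{t≥0} ‖h(φ(t,0,u))‖_Y : u ∈ M_per(U), sup_{s≥0}‖u(s)‖_U = 1 }, where M_per(U) := { u ∈ M(U) : u is periodic }. -/

import Mathlib

open Filter

noncomputable section

/-- A linear control system `Σ = (X, Y, M(U), φ, h)` in the sense of
Karafyllis, "On the Relation of IOS-Gains and Asymptotic Gains For Linear Systems".
Inputs are functions `u : ℝ → U`; only values on `[0, ∞)` are relevant. -/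
structure LinearControlSystem (X Y U : Type*)
    [NormedAddCommGroup X] [NormedSpace ℝ X]
    [NormedAddCommGroup Y] [NormedSpace ℝ Y]
    [NormedAddCommGroup U] [NormedSpace ℝ U] where
  /-- the set `M(U)` of admissible inputs -/
  inputs : Set (ℝ → U)
  /-- the transition map `φ` -/
  trans : ℝ → X → (ℝ → U) → X
  /-- the continuous linear output map `h : X → Y` -/
  out : X →L[ℝ] Y
  /-- `U ≠ {0}` -/
  U_nontrivial : ∃ v : U, v ≠ 0
  /-- inputs are locally bounded -/
  loc_bdd : ∀ u ∈ inputs, ∀ T : ℝ, BddAbove ((fun s => ‖u s‖) '' Set.Icc 0 T)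
  zero_mem : (0 : ℝ → U) ∈ inputs
  add_mem : ∀ u₁ ∈ inputs, ∀ u₂ ∈ inputs, u₁ + u₂ ∈ inputs
  smul_mem : ∀ u ∈ inputs, ∀ c : ℝ, c • u ∈ inputs
  concat_le_mem : ∀ u₁ ∈ inputs, ∀ u₂ ∈ inputs, ∀ τ > (0 : ℝ),
    (fun t => if t ≤ τ then u₁ t else u₂ (t - τ)) ∈ inputs
  concat_lt_mem : ∀ u₁ ∈ inputs, ∀ u₂ ∈ inputs, ∀ τ > (0 : ℝ),
    (fun t => if t < τ then u₁ t else u₂ (t - τ)) ∈ inputs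
  /-- closure under the shift operator `δ_τ` -/
  shift_mem : ∀ u ∈ inputs, ∀ τ > (0 : ℝ), (fun t => u (t + τ)) ∈ inputs
  exists_input_val : ∀ v : U, ∃ u ∈ inputs, u 0 = v
  /-- closure under `T`-periodic extension -/
  periodic_ext_mem : ∀ u ∈ inputs, ∀ T > (0 : ℝ),
    (fun t => u (t - T * ⌊t / T⌋)) ∈ inputs
  identity : ∀ x : X, ∀ u ∈ inputs, trans 0 x u = x
  causality : ∀ t ≥ (0 : ℝ), ∀ x : X, ∀ u ∈ inputs, ∀ v ∈ inputs,
    (∀ s, 0 ≤ s → s ≤ t → u s = v s) → trans t x u = trans t x v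
  semigroup : ∀ x : X, ∀ u ∈ inputs, ∀ τ t : ℝ, 0 ≤ τ → τ ≤ t →
    trans t x u = trans (t - τ) (trans τ x u) (fun s => u (s + τ))
  linearity : ∀ t ≥ (0 : ℝ), ∀ x₁ x₂ : X, ∀ u₁ ∈ inputs, ∀ u₂ ∈ inputs, ∀ a b : ℝ,
    trans t (a • x₁ + b • x₂) (a • u₁ + b • u₂) = a • trans t x₁ u₁ + b • trans t x₂ u₂

namespace LinearControlSystem

variable {X Y U : Type*}
    [NormedAddCommGroup X] [NormedSpace ℝ X]
    [NormedAddCommGroup Y] [NormedSpace ℝ Y]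
    [NormedAddCommGroup U] [NormedSpace ℝ U]

/-- `sup_{0 ≤ s ≤ t} ‖u(s)‖`. -/
def runSup (u : ℝ → U) (t : ℝ) : ℝ :=
  sSup ((fun s => ‖u s‖) '' Set.Icc 0 t)

/-- `sup_{s ≥ 0} ‖u(s)‖`. -/
def supNorm (u : ℝ → U) : ℝ :=
  sSup ((fun s => ‖u s‖) '' Set.Ici 0)

/-- exponential stability with the specific constants `M, σ > 0` -/
def IsES (sys : LinearControlSystem X Y U) (M σ : ℝ) : Prop :=
  0 < M ∧ 0 < σ ∧ ∀ x : X, ∀ t ≥ (0 : ℝ),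
    ‖sys.trans t x 0‖ ≤ M * Real.exp (-σ * t) * ‖x‖

/-- exponential stability (ES) -/
def ES (sys : LinearControlSystem X Y U) : Prop :=
  ∃ M σ : ℝ, sys.IsES M σ

/-- robustness with respect to the input, with the specific nondecreasing function `b` -/
def IsRobust (sys : LinearControlSystem X Y U) (b : ℝ → ℝ) : Prop :=
  MonotoneOn b (Set.Ici 0) ∧ (∀ t, 0 ≤ b t) ∧
    ∀ u ∈ sys.inputs, ∀ t ≥ (0 : ℝ), ‖sys.trans t 0 u‖ ≤ b t * runSup u t

/-- robustness with respect to the input -/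
def Robust (sys : LinearControlSystem X Y U) : Prop :=
  ∃ b : ℝ → ℝ, sys.IsRobust b

/-- strict causality -/
def StrictlyCausal (sys : LinearControlSystem X Y U) : Prop :=
  ∀ t > (0 : ℝ), ∀ u ∈ sys.inputs, ∀ v ∈ sys.inputs,
    (∀ s, 0 ≤ s → s < t → u s = v s) → sys.trans t 0 u = sys.trans t 0 v

/-- the minimum IOS-gain `γ` -/
def gain (sys : LinearControlSystem X Y U) : ℝ :=
  sSup {r | ∃ t ≥ (0 : ℝ), ∃ u ∈ sys.inputs, runSup u t = 1 ∧ r = ‖sys.out (sys.trans t 0 u)‖}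

/-- the minimum output asymptotic gain `γ_as` -/
def asympGain (sys : LinearControlSystem X Y U) : ℝ :=
  sSup {r | ∃ u ∈ sys.inputs, supNorm u = 1 ∧
    r = limsup (fun t => ‖sys.out (sys.trans t 0 u)‖) atTop}

/-- the value `V(T)` of the optimal control problem (4.5) -/
def V (sys : LinearControlSystem X Y U) (T : ℝ) : ℝ :=
  sSup {r | ∃ u ∈ sys.inputs, runSup u T = 1 ∧ r = ‖sys.out (sys.trans T 0 u)‖}

/-- periodic inputs -/
def Periodic (u : ℝ → U) : Prop :=
  ∃ T > (0 : ℝ), ∀ t ≥ (0 : ℝ), u (t + T) = u t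

end LinearControlSystem

/-!
By linearity, every output value satisfies `‖h(φ(t,0,u))‖ ≤ γ · sup_{[0,t]} ‖u‖`, and a periodic
input of sup-norm one has running supremum at most one, so the periodic suprema are at most `γ`.
Conversely, by strict causality `φ(t,0,u)` only depends on `u` on `[0,t)`: keeping `u` there,
padding it on `[t,t+1)` with an input whose supremum on `[0,1)` is one, and extending
`(t+1)`-periodically gives a periodic input of sup-norm one with the same state at time `t`.

All these suprema are finite: if the free flow halves every state after time `L` (exponential
stability), the semigroup property and robustness give, by induction on `⌈t/L⌉`,
`‖φ(t,0,u)‖ ≤ 2 b(L) sup_{[0,t]} ‖u‖`.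
-/

open Set Topology

namespace LinearControlSystem

lemma apply_add_nat_mul_of_periodic {α : Type*} {u : ℝ → α} {T s : ℝ} (hT : 0 ≤ T)
    (hper : ∀ t ≥ (0 : ℝ), u (t + T) = u t) (hs : 0 ≤ s) (n : ℕ) : u (s + n * T) = u s := by
  induction n with
  | zero => simp
  | succ n ih =>
    rw [Nat.cast_succ, add_one_mul, ← add_assoc, hper _ (by positivity), ih]

lemma sub_mul_floor_div_eq_toIcoMod {T : ℝ} (hT : 0 < T) (s : ℝ) :
    s - T * ⌊s / T⌋ = toIcoMod hT 0 s := by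
  rw [toIcoMod, toIcoDiv_eq_floor, sub_zero, zsmul_eq_mul, mul_comm]

section Norms

variable {U : Type*} [NormedAddCommGroup U] {u : ℝ → U} {t : ℝ}

lemma sSup_image_norm_smul [NormedSpace ℝ U] {k : ℝ} (hk : 0 ≤ k) (S : Set ℝ) :
    sSup ((fun s => ‖(k • u) s‖) '' S) = k * sSup ((fun s => ‖u s‖) '' S) := by
  rw [← smul_eq_mul, ← Real.sSup_smul_of_nonneg hk, ← image_smul, image_image]
  simp only [Pi.smul_apply, norm_smul, Real.norm_of_nonneg hk, smul_eq_mul]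

lemma runSup_nonneg : 0 ≤ runSup u t :=
  Real.sSup_nonneg (forall_mem_image.2 fun _ _ => norm_nonneg _)

lemma runSup_le {a : ℝ} (ht : 0 ≤ t) (h : ∀ s ∈ Icc 0 t, ‖u s‖ ≤ a) : runSup u t ≤ a :=
  csSup_le ((nonempty_Icc.2 ht).image _) (forall_mem_image.2 h)

lemma runSup_le_supNorm (hb : BddAbove ((fun s => ‖u s‖) '' Ici 0)) (ht : 0 ≤ t) :
    runSup u t ≤ supNorm u :=
  csSup_le_csSup hb ((nonempty_Icc.2 ht).image _) (image_mono Icc_subset_Ici_self)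

end Norms

variable {X Y U : Type*}
    [NormedAddCommGroup X] [NormedSpace ℝ X]
    [NormedAddCommGroup Y] [NormedSpace ℝ Y]
    [NormedAddCommGroup U] [NormedSpace ℝ U]
    (sys : LinearControlSystem X Y U) {u : ℝ → U} {s t : ℝ}

lemma norm_le_runSup (hu : u ∈ sys.inputs) (hs : s ∈ Icc 0 t) : ‖u s‖ ≤ runSup u t :=
  le_csSup (sys.loc_bdd u hu t) (mem_image_of_mem _ hs)

lemma runSup_mono (hu : u ∈ sys.inputs) {t' : ℝ} (ht : 0 ≤ t) (htt' : t ≤ t') :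
    runSup u t ≤ runSup u t' :=
  csSup_le_csSup (sys.loc_bdd u hu t') ((nonempty_Icc.2 ht).image _)
    (image_mono (Icc_subset_Icc_right htt'))

lemma bddAbove_norm_Ico (hu : u ∈ sys.inputs) (t : ℝ) :
    BddAbove ((fun s => ‖u s‖) '' Ico 0 t) :=
  (sys.loc_bdd u hu t).mono (image_mono Ico_subset_Icc_self)

lemma bddAbove_norm_of_periodic (hu : u ∈ sys.inputs) (hp : Periodic u) :
    BddAbove ((fun s => ‖u s‖) '' Ici 0) := by
  obtain ⟨T, hT, hper⟩ := hp
  refine ⟨runSup u T, forall_mem_image.2 fun s (hs : 0 ≤ s) => ?_⟩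
  set n := ⌊s / T⌋₊
  have hn : n * T ≤ s := (le_div_iff₀ hT).1 (Nat.floor_le (div_nonneg hs hT.le))
  have hn' : s < (n + 1) * T := (div_lt_iff₀ hT).1 (Nat.lt_floor_add_one _)
  rw [← sub_add_cancel s (n * T), apply_add_nat_mul_of_periodic hT.le hper (by linarith)]
  exact sys.norm_le_runSup hu ⟨by linarith, by linarith⟩

lemma runSup_le_one_of_periodic (hu : u ∈ sys.inputs) (hp : Periodic u) (h1 : supNorm u = 1)
    (ht : 0 ≤ t) : runSup u t ≤ 1 :=
  h1 ▸ runSup_le_supNorm (sys.bddAbove_norm_of_periodic hu hp) ht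

lemma periodic_ext_toIcoMod_mem (hu : u ∈ sys.inputs) {T : ℝ} (hT : 0 < T) :
    (fun s => u (toIcoMod hT 0 s)) ∈ sys.inputs := by
  simpa only [sub_mul_floor_div_eq_toIcoMod hT] using sys.periodic_ext_mem u hu T hT

lemma exists_input_sSup_norm_Ico_eq_one :
    ∃ w ∈ sys.inputs, sSup ((fun s => ‖w s‖) '' Ico 0 1) = 1 := by
  obtain ⟨e, he⟩ := sys.U_nontrivial
  obtain ⟨w, hw, hw0⟩ := sys.exists_input_val e
  have hpos : 0 < sSup ((fun s => ‖w s‖) '' Ico 0 1) :=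
    (norm_pos_iff.2 he).trans_le
      (hw0 ▸ le_csSup (sys.bddAbove_norm_Ico hw 1) ⟨0, ⟨le_rfl, one_pos⟩, rfl⟩)
  refine ⟨(sSup ((fun s => ‖w s‖) '' Ico 0 1))⁻¹ • w, sys.smul_mem w hw _, ?_⟩
  rw [sSup_image_norm_smul (inv_nonneg.2 hpos.le), inv_mul_cancel₀ hpos.ne']

lemma trans_smul (hu : u ∈ sys.inputs) (ht : 0 ≤ t) (k : ℝ) :
    sys.trans t 0 (k • u) = k • sys.trans t 0 u := by
  simpa using sys.linearity t ht 0 0 u hu u hu k 0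

lemma trans_eq_add (hu : u ∈ sys.inputs) (ht : 0 ≤ t) (x : X) :
    sys.trans t x u = sys.trans t x 0 + sys.trans t 0 u := by
  simpa using sys.linearity t ht x 0 0 sys.zero_mem u hu 1 1

lemma trans_zero_of_runSup_eq_zero (hu : u ∈ sys.inputs) (ht : 0 ≤ t) (h : runSup u t = 0) :
    sys.trans t 0 u = 0 := by
  have hvanish : ∀ s, 0 ≤ s → s ≤ t → u s = (0 : ℝ → U) s := fun s hs hst =>
    norm_le_zero_iff.1 (h ▸ sys.norm_le_runSup hu ⟨hs, hst⟩)
  rw [sys.causality t ht 0 u hu 0 sys.zero_mem hvanish]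
  simpa using sys.linearity t ht 0 0 0 sys.zero_mem 0 sys.zero_mem 0 0

section UniformBound

lemma exists_pos_norm_trans_le_half (hES : sys.ES) :
    ∃ L > 0, ∀ x, ‖sys.trans L x 0‖ ≤ ‖x‖ / 2 := by
  obtain ⟨M, σ, -, hσ, hdecay⟩ := hES
  have hlim : Tendsto (fun L => M * Real.exp (-σ * L)) atTop (𝓝 0) := by
    simpa [neg_mul] using
      (Real.tendsto_exp_neg_atTop_nhds_zero.comp (tendsto_id.const_mul_atTop hσ)).const_mul M
  obtain ⟨L, hL, hsmall⟩ :=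
    ((eventually_gt_atTop 0).and (hlim.eventually (gt_mem_nhds one_half_pos))).exists
  refine ⟨L, hL, fun x => ?_⟩
  calc ‖sys.trans L x 0‖ ≤ M * Real.exp (-σ * L) * ‖x‖ := hdecay x L hL.le
    _ ≤ 1 / 2 * ‖x‖ := by gcongr
    _ = ‖x‖ / 2 := by ring

variable {b : ℝ → ℝ} {L : ℝ}

lemma norm_trans_add_le (hb : sys.IsRobust b) (hL : 0 < L)
    (hhalf : ∀ x, ‖sys.trans L x 0‖ ≤ ‖x‖ / 2) (hu : u ∈ sys.inputs) {τ : ℝ} (hτ : 0 < τ) :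
    ‖sys.trans (τ + L) 0 u‖ ≤ ‖sys.trans τ 0 u‖ / 2 + b L * runSup u (τ + L) := by
  set w : ℝ → U := fun s => u (s + τ)
  have hw : w ∈ sys.inputs := sys.shift_mem u hu τ hτ
  have hsplit : sys.trans (τ + L) 0 u = sys.trans L (sys.trans τ 0 u) 0 + sys.trans L 0 w := by
    rw [sys.semigroup 0 u hu τ (τ + L) hτ.le (by linarith), add_sub_cancel_left,
      sys.trans_eq_add hw hL.le]
  have hw_le : runSup w L ≤ runSup u (τ + L) :=
    runSup_le hL.le fun s hs => sys.norm_le_runSup hu ⟨by linarith [hs.1], by linarith [hs.2]⟩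
  calc ‖sys.trans (τ + L) 0 u‖
      ≤ ‖sys.trans L (sys.trans τ 0 u) 0‖ + ‖sys.trans L 0 w‖ := hsplit ▸ norm_add_le _ _
    _ ≤ ‖sys.trans τ 0 u‖ / 2 + b L * runSup u (τ + L) :=
      add_le_add (hhalf _) ((hb.2.2 w hw L hL.le).trans (by gcongr; exact hb.2.1 L))

lemma norm_trans_le_of_half (hb : sys.IsRobust b) (hL : 0 < L)
    (hhalf : ∀ x, ‖sys.trans L x 0‖ ≤ ‖x‖ / 2) (hu : u ∈ sys.inputs) (ht : 0 ≤ t) :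
    ‖sys.trans t 0 u‖ ≤ 2 * b L * runSup u t := by
  have hbL : 0 ≤ b L := hb.2.1 L
  suffices key : ∀ n : ℕ, ∀ t ∈ Icc 0 (n * L), ‖sys.trans t 0 u‖ ≤ 2 * b L * runSup u t from
    key ⌈t / L⌉₊ t ⟨ht, (div_le_iff₀ hL).1 (Nat.le_ceil _)⟩
  intro n
  induction n with
  | zero =>
    rintro t ⟨ht0, ht0'⟩
    obtain rfl : t = 0 := by simp at ht0'; linarith
    rw [sys.identity 0 u hu, norm_zero]
    exact mul_nonneg (by positivity) runSup_nonneg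
  | succ n ih =>
    rintro t ⟨ht0, htn⟩
    by_cases htL : t ≤ L
    · calc ‖sys.trans t 0 u‖ ≤ b t * runSup u t := hb.2.2 u hu t ht0
        _ ≤ 2 * b L * runSup u t := by
          gcongr
          · exact runSup_nonneg
          · linarith [hb.1 ht0 hL.le htL, hb.2.1 t]
    obtain ⟨τ, rfl⟩ : ∃ τ, t = τ + L := ⟨t - L, by ring⟩
    have hτ : 0 < τ := by linarith
    have hτn : ‖sys.trans τ 0 u‖ ≤ 2 * b L * runSup u (τ + L) :=
      (ih τ ⟨hτ.le, by push_cast at htn; linarith⟩).trans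
        (by gcongr; exact sys.runSup_mono hu hτ.le (by linarith))
    linarith [sys.norm_trans_add_le hb hL hhalf hu hτ]

lemma exists_norm_trans_le_mul_runSup (hES : sys.ES) (hrob : sys.Robust) :
    ∃ C, ∀ u ∈ sys.inputs, ∀ t ≥ 0, ‖sys.trans t 0 u‖ ≤ C * runSup u t := by
  obtain ⟨b, hb⟩ := hrob
  obtain ⟨L, hL, hhalf⟩ := sys.exists_pos_norm_trans_le_half hES
  exact ⟨2 * b L, fun u hu t ht => sys.norm_trans_le_of_half hb hL hhalf hu ht⟩

end UniformBound

lemma gain_nonneg : 0 ≤ sys.gain :=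
  Real.sSup_nonneg (by rintro _ ⟨t, -, u, -, -, rfl⟩; exact norm_nonneg _)

lemma bddAbove_gain (hES : sys.ES) (hrob : sys.Robust) :
    BddAbove {r | ∃ t ≥ (0 : ℝ), ∃ u ∈ sys.inputs, runSup u t = 1 ∧
      r = ‖sys.out (sys.trans t 0 u)‖} := by
  obtain ⟨C, hC⟩ := sys.exists_norm_trans_le_mul_runSup hES hrob
  refine ⟨‖sys.out‖ * C, ?_⟩
  rintro _ ⟨t, ht, u, hu, h1, rfl⟩
  calc ‖sys.out (sys.trans t 0 u)‖ ≤ ‖sys.out‖ * ‖sys.trans t 0 u‖ := sys.out.le_opNorm _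
    _ ≤ ‖sys.out‖ * (C * runSup u t) := by gcongr; exact hC u hu t ht
    _ = ‖sys.out‖ * C := by rw [h1, mul_one]

lemma norm_out_trans_le_gain_mul (hES : sys.ES) (hrob : sys.Robust) (hu : u ∈ sys.inputs)
    (ht : 0 ≤ t) : ‖sys.out (sys.trans t 0 u)‖ ≤ sys.gain * runSup u t := by
  rcases (runSup_nonneg (u := u) (t := t)).eq_or_lt with h0 | hpos
  · simp [sys.trans_zero_of_runSup_eq_zero hu ht h0.symm, ← h0]
  have hc : 0 ≤ (runSup u t)⁻¹ := inv_nonneg.2 hpos.le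
  have hnormalized := le_csSup (sys.bddAbove_gain hES hrob)
    ⟨t, ht, (runSup u t)⁻¹ • u, sys.smul_mem u hu _,
      (sSup_image_norm_smul hc _).trans (inv_mul_cancel₀ hpos.ne'), rfl⟩
  rw [sys.trans_smul hu ht, map_smul, norm_smul, Real.norm_of_nonneg hc,
    inv_mul_le_iff₀ hpos, mul_comm] at hnormalized
  exact hnormalized

lemma norm_out_trans_le_gain_of_periodic (hES : sys.ES) (hrob : sys.Robust)
    (hu : u ∈ sys.inputs) (hp : Periodic u) (h1 : supNorm u = 1) (ht : 0 ≤ t) :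
    ‖sys.out (sys.trans t 0 u)‖ ≤ sys.gain :=
  (sys.norm_out_trans_le_gain_mul hES hrob hu ht).trans
    (mul_le_of_le_one_right sys.gain_nonneg (sys.runSup_le_one_of_periodic hu hp h1 ht))

lemma exists_periodic_trans_eq_of_pos (hsc : sys.StrictlyCausal) (hu : u ∈ sys.inputs)
    (ht : 0 < t) (h1 : runSup u t ≤ 1) :
    ∃ v ∈ sys.inputs, Periodic v ∧ supNorm v = 1 ∧ sys.trans t 0 v = sys.trans t 0 u := by
  obtain ⟨w, hw, hw1⟩ := sys.exists_input_sSup_norm_Ico_eq_one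
  have hT : 0 < t + 1 := by linarith
  set p : ℝ → U := fun s => if s < t then u s else w (s - t)
  have hp_mem : p ∈ sys.inputs := sys.concat_lt_mem u hu w hw t ht
  have hp_le : ∀ s ∈ Ico 0 (t + 1), ‖p s‖ ≤ 1 := by
    intro s hs
    simp only [p]
    split_ifs with hst
    · exact (sys.norm_le_runSup hu ⟨hs.1, hst.le⟩).trans h1
    · exact hw1 ▸ le_csSup (sys.bddAbove_norm_Ico hw 1)
        ⟨s - t, ⟨by linarith, by linarith [hs.2]⟩, rfl⟩
  set v : ℝ → U := fun s => p (toIcoMod hT 0 s)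
  have hv_mem : v ∈ sys.inputs := sys.periodic_ext_toIcoMod_mem hp_mem hT
  have hv_eq : ∀ s ∈ Ico 0 (t + 1), v s = p s := fun s hs => by
    simp only [v, (toIcoMod_eq_self hT).2 (by rwa [zero_add])]
  have hv_le : ∀ s, ‖v s‖ ≤ 1 := fun s => hp_le _ (toIcoMod_mem_Ico' hT s)
  have hv_bdd : BddAbove ((fun s => ‖v s‖) '' Ici 0) := ⟨1, forall_mem_image.2 fun s _ => hv_le s⟩
  refine ⟨v, hv_mem,
    ⟨t + 1, hT, fun s _ => by simp only [v, toIcoMod_add_right]⟩, le_antisymm ?_ ?_, ?_⟩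
  · exact csSup_le (nonempty_Ici.image _) (forall_mem_image.2 fun s _ => hv_le s)
  · rw [← hw1]
    refine csSup_le ((nonempty_Ico.2 one_pos).image _) (forall_mem_image.2 fun s hs => ?_)
    have hvw : v (s + t) = w s := by
      rw [hv_eq _ ⟨by linarith [hs.1], by linarith [hs.2]⟩]
      simp [p, hs.1]
    exact hvw ▸ le_csSup hv_bdd ⟨s + t, add_nonneg hs.1 ht.le, rfl⟩
  · refine hsc t ht v hv_mem u hu fun s hs hst => ?_
    rw [hv_eq s ⟨hs, by linarith⟩]
    simp [p, hst]

lemma exists_periodic_trans_eq (hsc : sys.StrictlyCausal) (hu : u ∈ sys.inputs) (ht : 0 ≤ t)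
    (h1 : runSup u t ≤ 1) :
    ∃ v ∈ sys.inputs, Periodic v ∧ supNorm v = 1 ∧ sys.trans t 0 v = sys.trans t 0 u := by
  rcases ht.eq_or_lt with rfl | hpos
  · obtain ⟨v, hv, hp, h1, -⟩ := sys.exists_periodic_trans_eq_of_pos hsc sys.zero_mem one_pos
      (runSup_le zero_le_one fun _ _ => by simp)
    exact ⟨v, hv, hp, h1, by rw [sys.identity 0 v hv, sys.identity 0 u hu]⟩
  · exact sys.exists_periodic_trans_eq_of_pos hsc hu hpos h1

end LinearControlSystem

open LinearControlSystem in
/-- Theorem 4.3, equation (4.7): for an ES, robust, strictly causal linear control system,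
the minimum IOS-gain can be computed using only periodic inputs. -/
theorem statement_7 {X Y U : Type*}
    [NormedAddCommGroup X] [NormedSpace ℝ X]
    [NormedAddCommGroup Y] [NormedSpace ℝ Y]
    [NormedAddCommGroup U] [NormedSpace ℝ U]
    (sys : LinearControlSystem X Y U)
    (hES : sys.ES) (hrob : sys.Robust) (hsc : sys.StrictlyCausal) :
    sys.gain = sSup {r | ∃ u ∈ sys.inputs, Periodic u ∧ supNorm u = 1 ∧
      r = sSup ((fun t => ‖sys.out (sys.trans t 0 u)‖) '' Set.Ici 0)} := by
  set B := {r | ∃ u ∈ sys.inputs, Periodic u ∧ supNorm u = 1 ∧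
    r = sSup ((fun t => ‖sys.out (sys.trans t 0 u)‖) '' Ici 0)}
  have hB_le : ∀ r ∈ B, r ≤ sys.gain := by
    rintro _ ⟨u, hu, hp, h1, rfl⟩
    exact Real.sSup_le (forall_mem_image.2 fun t ht =>
      sys.norm_out_trans_le_gain_of_periodic hES hrob hu hp h1 ht) sys.gain_nonneg
  refine le_antisymm ?_ (Real.sSup_le hB_le sys.gain_nonneg)
  refine Real.sSup_le ?_ (Real.sSup_nonneg ?_)
  · rintro _ ⟨t, ht, u, hu, h1, rfl⟩
    obtain ⟨v, hv, hp, hv1, heq⟩ := sys.exists_periodic_trans_eq hsc hu ht h1.le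
    calc ‖sys.out (sys.trans t 0 u)‖ = ‖sys.out (sys.trans t 0 v)‖ := by rw [heq]
      _ ≤ sSup ((fun t => ‖sys.out (sys.trans t 0 v)‖) '' Ici 0) :=
        le_csSup ⟨sys.gain, forall_mem_image.2 fun s hs =>
          sys.norm_out_trans_le_gain_of_periodic hES hrob hv hp hv1 hs⟩ ⟨t, ht, rfl⟩
      _ ≤ sSup B := le_csSup ⟨sys.gain, hB_le⟩ ⟨v, hv, hp, hv1, rfl⟩
  · rintro _ ⟨u, -, -, -, rfl⟩
    exact Real.sSup_nonneg (forall_mem_image.2 fun _ _ => norm_nonneg _)
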